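/- arXiv:1606.01642 — 9 statements merged into one kernel-verified Lean document; each statement's English description precedes it below -/
import Mathlib

section
/- Let E₁, …, Eₙ, F be linearly topologized vector spaces, let f : E₁ × ⋯ × Eₙ → F be multilinear and hypocontinuous, and let Bᵢ ⊆ Eᵢ be linearly bounded subspaces. Then the span of f(B₁ × ⋯ × Bₙ) is a linearly bounded subspace of F. -/
/-- A subspace `B` of a topological vector space is linearly bounded if for
every open linear subspace `U` there is a finite-dimensional subspace `A` with
`B ⊆ U + A`. -/
def LinearlyBounded (K : Type*) {M : Type*} [Field K] [AddCommGroup M]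
    [Module K M] [TopologicalSpace M] (B : Submodule K M) : Prop :=
  ∀ U : Submodule K M, IsOpen (U : Set M) →
    ∃ A : Submodule K M, FiniteDimensional K A ∧ B ≤ U ⊔ A

/-- A topological vector space is linearly topologized if its topology is
generated by a filter of linear subspaces. -/
def LinearlyTopologized (K M : Type*) [Field K] [AddCommGroup M] [Module K M]
    [TopologicalSpace M] : Prop :=
  ∃ L : Set (Submodule K M), L.Nonempty ∧
    (∀ V₁ ∈ L, ∀ V₂ ∈ L, ∃ V₃ ∈ L, V₃ ≤ V₁ ⊓ V₂) ∧
    ∀ U : Set M, IsOpen U ↔ ∀ x ∈ U, ∃ V ∈ L, {y : M | y - x ∈ V} ⊆ U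

open Submodule in
/-- If `B ≤ U ⊔ A` with `A` finite-dimensional, we can choose a finite-dimensional
complement inside `B`. -/
lemma exists_findim_le_of_le_sup {K M : Type*} [Field K] [AddCommGroup M] [Module K M]
    {U B A : Submodule K M} (hA : FiniteDimensional K A) (h : B ≤ U ⊔ A) :
    ∃ A' : Submodule K M, FiniteDimensional K A' ∧ A' ≤ B ∧ B ≤ U ⊔ A' := by
  classical
  set q := U.mkQ with hq
  have hUmap : U.map q = ⊥ := by
    exact Submodule.mkQ_map_self U
  have hmap : B.map q ≤ A.map q := by
    refine le_trans (Submodule.map_mono h) ?_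
    rw [Submodule.map_sup, hUmap, bot_sup_eq]
  haveI : FiniteDimensional K (A.map q) := by
    rw [← Submodule.fg_iff_finiteDimensional] at hA ⊢
    exact hA.map q
  haveI : FiniteDimensional K (B.map q) :=
    Submodule.finiteDimensional_of_le hmap
  obtain ⟨s, hs⟩ : (B.map q).FG := (Submodule.fg_iff_finiteDimensional _).mpr inferInstance
  have hmem : ∀ c ∈ s, ∃ b, b ∈ B ∧ q b = c := by
    intro c hc
    have : c ∈ B.map q := hs ▸ Submodule.subset_span hc
    obtain ⟨b, hb, hbc⟩ := Submodule.mem_map.mp this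
    exact ⟨b, hb, hbc⟩
  choose g hgB hgq using hmem
  refine ⟨Submodule.span K ↑(s.attach.image fun c => g c.1 c.2), ?_, ?_, ?_⟩
  · exact FiniteDimensional.span_of_finite K (Finset.finite_toSet _)
  · rw [Submodule.span_le]
    intro z hz
    simp only [Finset.coe_image, Set.mem_image, Finset.mem_coe, Finset.mem_attach] at hz
    obtain ⟨c, -, rfl⟩ := hz
    exact hgB c.1 c.2
  · intro b hb
    have hqb : q b ∈ Submodule.span K (↑s : Set (M ⧸ U)) := by
      rw [hs]; exact Submodule.mem_map_of_mem hb
    obtain ⟨r, -, hr⟩ := mem_span_finset.mp hqb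
    set a := ∑ c ∈ s.attach, r c.1 • g c.1 c.2 with ha
    have haA : a ∈ Submodule.span K ↑(s.attach.image fun c => g c.1 c.2) := by
      refine Submodule.sum_mem _ fun c _ => Submodule.smul_mem _ _ ?_
      exact Submodule.subset_span (by simp)
    have hqa : q a = q b := by
      rw [ha, map_sum]
      rw [← hr, ← Finset.sum_attach s (fun c => r c • c)]
      refine Finset.sum_congr rfl fun c _ => ?_
      rw [map_smul, hgq]
    have hbU : b - a ∈ U := by
      rw [← Submodule.ker_mkQ U, LinearMap.mem_ker, map_sub, hqa, sub_self]
    rw [Submodule.mem_sup]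
    exact ⟨b - a, hbU, a, haA, by abel⟩

lemma findim_span_multilinear_image {K : Type*} [Field K] {n : ℕ} {E : Fin n → Type*}
    {F : Type*} [∀ i, AddCommGroup (E i)] [∀ i, Module K (E i)]
    [AddCommGroup F] [Module K F] (f : MultilinearMap K E F)
    (A : ∀ i, Submodule K (E i)) (hA : ∀ i, FiniteDimensional K (A i)) :
    FiniteDimensional K
      (Submodule.span K {y : F | ∃ x : ∀ j, E j, (∀ j, x j ∈ A j) ∧ f x = y}) := by
  classical
  have hfg : ∀ i, ∃ t : Finset (E i), Submodule.span K (↑t : Set (E i)) = A i := by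
    intro i
    exact (Submodule.fg_iff_finiteDimensional (A i)).mpr (hA i)
  choose t ht using hfg
  set T : Finset F := (Fintype.piFinset t).image f with hT
  have hle : Submodule.span K {y : F | ∃ x : ∀ j, E j, (∀ j, x j ∈ A j) ∧ f x = y}
      ≤ Submodule.span K (↑T : Set F) := by
    rw [Submodule.span_le]
    rintro y ⟨x, hx, rfl⟩
    have hr : ∀ j, ∃ r : E j → K, ∑ a ∈ t j, r a • a = x j := by
      intro j
      obtain ⟨r, -, hr⟩ := Submodule.mem_span_finset.mp ((ht j) ▸ hx j)
      exact ⟨r, hr⟩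
    choose r hr using hr
    have hx' : x = fun j => ∑ a ∈ t j, r j a • a := funext fun j => (hr j).symm
    rw [hx', f.map_sum_finset (fun j a => r j a • a) t]
    refine Submodule.sum_mem _ fun p hp => ?_
    rw [f.map_smul_univ (fun j => r j (p j)) (fun j => p j)]
    refine Submodule.smul_mem _ _ (Submodule.subset_span ?_)
    simp only [hT, Finset.coe_image, Set.mem_image, Finset.mem_coe]
    exact ⟨fun j => p j, by simpa using fun j => (Fintype.mem_piFinset.mp hp) j, rfl⟩
  haveI : FiniteDimensional K (Submodule.span K (↑T : Set F)) :=
    FiniteDimensional.span_of_finite K (Finset.finite_toSet T)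
  exact Submodule.finiteDimensional_of_le hle

/-- The image of a product of linearly bounded subspaces under a
hypocontinuous multilinear map spans a linearly bounded subspace. -/
theorem multilinear_hypocontinuous_image_linearlyBounded
    {K : Type*} [Field K] {n : ℕ} {E : Fin n → Type*} {F : Type*}
    [∀ i, AddCommGroup (E i)] [∀ i, Module K (E i)]
    [∀ i, TopologicalSpace (E i)]
    [AddCommGroup F] [Module K F] [TopologicalSpace F]
    (hE : ∀ i, LinearlyTopologized K (E i)) (hF : LinearlyTopologized K F)
    (f : MultilinearMap K E F)
    (hf : ∀ (i : Fin n) (V : Submodule K F), IsOpen (V : Set F) →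
      ∀ C : ∀ j, Submodule K (E j), (∀ j, j ≠ i → LinearlyBounded K (C j)) →
        ∃ U : Submodule K (E i), IsOpen (U : Set (E i)) ∧
          ∀ x : ∀ j, E j, (∀ j, j ≠ i → x j ∈ C j) → x i ∈ U → f x ∈ V)
    (B : ∀ i, Submodule K (E i)) (hB : ∀ i, LinearlyBounded K (B i)) :
    LinearlyBounded K
      (Submodule.span K {y : F | ∃ x : ∀ j, E j, (∀ j, x j ∈ B j) ∧ f x = y}) := by
  classical
  intro V hV
  have h1 : ∀ i : Fin n, ∃ U : Submodule K (E i), IsOpen (U : Set (E i)) ∧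
      ∀ x : ∀ j, E j, (∀ j, j ≠ i → x j ∈ B j) → x i ∈ U → f x ∈ V :=
    fun i => hf i V hV B (fun j _ => hB j)
  choose U hUopen hUprop using h1
  have h2 : ∀ i, ∃ A : Submodule K (E i),
      FiniteDimensional K A ∧ A ≤ B i ∧ B i ≤ U i ⊔ A := by
    intro i
    obtain ⟨A, hAfd, hBA⟩ := hB i (U i) (hUopen i)
    exact exists_findim_le_of_le_sup hAfd hBA
  choose A hAfd hAB hBUA using h2
  refine ⟨Submodule.span K {y : F | ∃ x : ∀ j, E j, (∀ j, x j ∈ A j) ∧ f x = y},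
    findim_span_multilinear_image f A hAfd, ?_⟩
  rw [Submodule.span_le]
  rintro y ⟨x, hx, rfl⟩
  have hdec : ∀ j, ∃ u a, u ∈ U j ∧ u ∈ B j ∧ a ∈ A j ∧ x j = u + a := by
    intro j
    obtain ⟨u, hu, a, ha, h⟩ := Submodule.mem_sup.mp (hBUA j (hx j))
    have hu' : u ∈ B j := by
      have : u = x j - a := by rw [← h]; abel
      rw [this]
      exact Submodule.sub_mem _ (hx j) (hAB j ha)
    exact ⟨u, a, hu, hu', ha, h.symm⟩
  choose u a huU huB haA hxe using hdec
  have hxua : x = u + a := funext fun j => hxe j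
  rw [hxua, f.map_add_univ u a]
  refine Submodule.sum_mem _ fun s _ => ?_
  rcases eq_or_ne s ∅ with rfl | hs
  · rw [Finset.piecewise_empty]
    have : f a ∈ {y : F | ∃ x : ∀ j, E j, (∀ j, x j ∈ A j) ∧ f x = y} :=
      ⟨a, fun j => haA j, rfl⟩
    exact SetLike.le_def.mp le_sup_right (Submodule.subset_span this)
  · obtain ⟨i, hi⟩ := Finset.nonempty_iff_ne_empty.mpr hs
    refine SetLike.le_def.mp le_sup_left (hUprop i _ ?_ ?_)
    · intro j _
      by_cases hj : j ∈ s
      · rw [Finset.piecewise_eq_of_mem _ _ _ hj]; exact huB j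
      · rw [Finset.piecewise_eq_of_notMem _ _ _ hj]; exact hAB j (haA j)
    · rw [Finset.piecewise_eq_of_mem _ _ _ hi]; exact huU i
end

section
/- For any finiteness space X over a field K, the linearly topologized vector space K⟨X⟩ is Cauchy-complete: every Cauchy net in K⟨X⟩ converges. -/
/-- The orthogonal of a collection of subsets of `I`. -/
def orth {I : Type*} (F : Set (Set I)) : Set (Set I) :=
  {u' | ∀ u ∈ F, (u ∩ u').Finite}

/-- The support of a family of scalars. -/
def Supp {I K : Type*} [Zero K] (x : I → K) : Set I := {a | x a ≠ 0}

/-- The space `K⟨X⟩` of families with support in `F`. -/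
def FinVec {I : Type*} (K : Type*) [Zero K] (F : Set (Set I)) : Type _ :=
  {x : I → K // Supp x ∈ F}

/-- For any finiteness space `X`, the ltvs `K⟨X⟩` is Cauchy-complete: every
Cauchy net (w.r.t. the basic neighborhoods `V(u')`, `u' ∈ F^⊥`) converges. -/
theorem finVec_complete {I : Type*} (K : Type*) [Field K] (F : Set (Set I))
    (hF : orth (orth F) = F)
    (D : Type*) [Nonempty D] [Preorder D] [IsDirected D (· ≤ ·)]
    (x : D → FinVec K F)
    (hCauchy : ∀ u' ∈ orth F, ∃ d : D, ∀ e : D, d ≤ e →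
      ∀ a ∈ u', (x e).1 a = (x d).1 a) :
    ∃ l : FinVec K F, ∀ u' ∈ orth F, ∃ d : D, ∀ e : D, d ≤ e →
      ∀ a ∈ u', (x e).1 a = l.1 a := by
  -- singletons are in orth F
  have hsing : ∀ a : I, ({a} : Set I) ∈ orth F := by
    intro a u _
    exact (Set.finite_singleton a).inter_of_right u
  -- choose a stabilization index for each point
  choose dd hdd using fun a => hCauchy {a} (hsing a)
  -- the limit function
  set l : I → K := fun a => (x (dd a)).1 a with hl
  -- on any u' ∈ orth F with witness d, l agrees with x d on u'
  have key : ∀ u', u' ∈ orth F → ∃ d : D,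
      (∀ e : D, d ≤ e → ∀ a ∈ u', (x e).1 a = (x d).1 a) ∧
      (∀ a ∈ u', l a = (x d).1 a) := by
    intro u' hu'
    obtain ⟨d, hd⟩ := hCauchy u' hu'
    refine ⟨d, hd, fun a ha => ?_⟩
    obtain ⟨f, hf1, hf2⟩ := directed_of (· ≤ ·) d (dd a)
    have h1 : (x f).1 a = (x d).1 a := hd f hf1 a ha
    have h2 : (x f).1 a = (x (dd a)).1 a := hdd a f hf2 a rfl
    simp only [hl]
    rw [← h2, h1]
  -- l has support in F
  have hsupp : Supp l ∈ F := by
    rw [← hF]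
    intro u' hu'
    obtain ⟨d, -, hd⟩ := key u' hu'
    have hsub : u' ∩ Supp l ⊆ Supp (x d).1 ∩ u' := by
      rintro a ⟨hau, ha⟩
      refine ⟨?_, hau⟩
      simpa [Supp, ← hd a hau] using ha
    exact (hu' (Supp (x d).1) (x d).2).subset hsub
  refine ⟨⟨l, hsupp⟩, fun u' hu' => ?_⟩
  obtain ⟨d, hd, hdl⟩ := key u' hu'
  exact ⟨d, fun e he a ha => by rw [hd e he a ha, ← hdl a ha]⟩
end

section
/- Let X be a finiteness space. The topological vector space K⟨X⟩ is metrizable if and only if there exists a monotone sequence (u'ₙ)_{n∈ℕ} in F(X)^⊥ (n ≤ m ⟹ u'ₙ ⊆ u'ₘ) such that every u' ∈ F(X)^⊥ is contained in some u'ₙ. -/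
/-- The canonical linear topology on `K⟨X⟩`: a set `U` is open iff every
`x ∈ U` has a basic neighborhood `x + V(u')` (the set of `y` agreeing with `x`
on `u'`) contained in `U`, for some `u' ∈ F^⊥`. -/
def finTopology {I : Type*} (K : Type*) [Zero K] (F : Set (Set I)) :
    TopologicalSpace (FinVec K F) where
  IsOpen U := ∀ x ∈ U, ∃ u' ∈ orth F,
    {y : FinVec K F | ∀ a ∈ u', y.1 a = x.1 a} ⊆ U
  isOpen_univ := fun x _ =>
    ⟨∅, by intro u _; simp, fun y _ => trivial⟩
  isOpen_inter := by
    intro U V hU hV x hx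
    obtain ⟨u₁, hu₁, hU₁⟩ := hU x hx.1
    obtain ⟨u₂, hu₂, hU₂⟩ := hV x hx.2
    refine ⟨u₁ ∪ u₂, ?_, ?_⟩
    · intro u hu
      rw [Set.inter_union_distrib_left]
      exact (hu₁ u hu).union (hu₂ u hu)
    · intro y hy
      exact ⟨hU₁ fun a ha => hy a (Or.inl ha), hU₂ fun a ha => hy a (Or.inr ha)⟩
  isOpen_sUnion := by
    intro s hs x hx
    obtain ⟨U, hUs, hxU⟩ := hx
    obtain ⟨u', hu', hsub⟩ := hs U hUs x hxU
    exact ⟨u', hu', fun y hy => ⟨U, hUs, hsub hy⟩⟩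


/-- `K⟨X⟩` is metrizable iff there is a monotone sequence in `F^⊥` which is
cofinal in `F^⊥` for inclusion. -/
theorem finVec_metrizable_iff {I : Type*} (K : Type*) [Field K]
    (F : Set (Set I)) (hF : orth (orth F) = F) :
    @TopologicalSpace.MetrizableSpace (FinVec K F) (finTopology K F) ↔
      ∃ u' : ℕ → Set I, (∀ n, u' n ∈ orth F) ∧ Monotone u' ∧
        ∀ v' ∈ orth F, ∃ n, v' ⊆ u' n := by
  classical
  have hsingleton : ∀ a : I, ({a} : Set I) ∈ orth F := fun a u _ =>
    (Set.finite_singleton a).inter_of_right u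
  have hsingF : ∀ a : I, ({a} : Set I) ∈ F := fun a =>
    hF ▸ (fun u _ => (Set.finite_singleton a).inter_of_right u)
  have hemptyF : (∅ : Set I) ∈ F := hF ▸ (fun u _ => by simp)
  constructor
  · intro h
    -- the zero vector
    set z : FinVec K F := ⟨fun _ => 0, by
      have : Supp (fun _ : I => (0 : K)) = ∅ := by ext a; simp [Supp]
      rw [this]; exact hemptyF⟩ with hz
    obtain ⟨m, hm, hcgu⟩ := h.exists_countably_generated
    have hcg : (@nhds _ (finTopology K F) z).IsCountablyGenerated := by
      rw [← hm]
      letI := m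
      infer_instance
    obtain ⟨B, hB⟩ := @Filter.exists_antitone_basis _ _ hcg
    have key : ∀ n, ∃ v ∈ orth F, {y : FinVec K F | ∀ a ∈ v, y.1 a = 0} ⊆ B n := by
      intro n
      have hBn : B n ∈ @nhds _ (finTopology K F) z := hB.mem n
      rw [@mem_nhds_iff _ (finTopology K F) _ _] at hBn
      obtain ⟨t, hts, hto, hzt⟩ := hBn
      obtain ⟨v, hv, hsub⟩ := hto z hzt
      exact ⟨v, hv, fun y hy => hts (hsub fun a ha => hy a ha)⟩
    choose v hv hvsub using key
    refine ⟨fun n => ⋃ k ≤ n, v k, ?_, ?_, ?_⟩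
    · intro n u hu
      have : u ∩ ⋃ k ≤ n, v k = ⋃ k ≤ n, u ∩ v k := by
        simp [Set.inter_iUnion]
      rw [this]
      exact (Set.finite_Iic n).biUnion fun k _ => hv k u hu
    · intro n m' hnm
      exact Set.biUnion_subset_biUnion_left fun k (hk : k ≤ n) => hk.trans hnm
    · intro v' hv'
      set V : Set (FinVec K F) := {y | ∀ a ∈ v', y.1 a = 0} with hV
      have hVopen : @IsOpen _ (finTopology K F) V := by
        intro x hx
        exact ⟨v', hv', fun y hy a ha => (hy a ha).trans (hx a ha)⟩
      have hzV : z ∈ V := fun a _ => rfl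
      have hVnhds : V ∈ @nhds _ (finTopology K F) z :=
        (@mem_nhds_iff _ (finTopology K F) _ _).mpr ⟨V, subset_rfl, hVopen, hzV⟩
      obtain ⟨n, -, hBV⟩ := hB.toHasBasis.mem_iff.mp hVnhds
      refine ⟨n, fun a ha => ?_⟩
      have hav : a ∈ v n := by
        by_contra hav
        set y : FinVec K F := ⟨fun b => if b = a then 1 else 0, by
          have : Supp (fun b => if b = a then (1 : K) else 0) = {a} := by
            ext b; by_cases hb : b = a <;> simp [Supp, hb]
          rw [this]; exact hsingF a⟩ with hy
        have hyV : y ∈ B n := hvsub n (by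
          intro b hb
          have : b ≠ a := fun h => hav (h ▸ hb)
          simp [hy, this])
        have := hBV hyV a ha
        simp [hy] at this
      exact Set.mem_biUnion (le_refl n) hav
  · rintro ⟨u, hu, humono, hucof⟩
    letI : TopologicalSpace (FinVec K F) := finTopology K F
    set d : FinVec K F → FinVec K F → ℝ := fun x y =>
      if h : ∃ n, ¬ ∀ a ∈ u n, x.1 a = y.1 a then (2⁻¹ : ℝ) ^ Nat.find h else 0
      with hd
    have half_pos : (0 : ℝ) < 2⁻¹ := by norm_num
    have half_lt_one : (2⁻¹ : ℝ) < 1 := by norm_num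
    have hd_nonneg : ∀ x y, 0 ≤ d x y := by
      intro x y
      rw [hd]; dsimp only
      split
      · positivity
      · exact le_refl 0
    have hd_pos_eq : ∀ x y (h : ∃ n, ¬ ∀ a ∈ u n, x.1 a = y.1 a),
        d x y = (2⁻¹ : ℝ) ^ Nat.find h := by
      intro x y h; simp only [hd]; rw [dif_pos h]
    have hd_neg_eq : ∀ x y, (¬ ∃ n, ¬ ∀ a ∈ u n, x.1 a = y.1 a) → d x y = 0 := by
      intro x y h; simp only [hd]; rw [dif_neg h]
    have hd_self : ∀ x, d x x = 0 := by
      intro x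
      refine hd_neg_eq x x ?_
      push_neg
      exact fun n a _ => rfl
    have hd_comm : ∀ x y, d x y = d y x := by
      intro x y
      by_cases h : ∃ n, ¬ ∀ a ∈ u n, x.1 a = y.1 a
      · have h' : ∃ n, ¬ ∀ a ∈ u n, y.1 a = x.1 a := by
          obtain ⟨n, hn⟩ := h
          exact ⟨n, fun hc => hn fun a ha => (hc a ha).symm⟩
        rw [hd_pos_eq x y h, hd_pos_eq y x h']
        congr 1
        apply le_antisymm
        · exact Nat.find_le fun hc => Nat.find_spec h' fun a ha => (hc a ha).symm
        · exact Nat.find_le fun hc => Nat.find_spec h fun a ha => (hc a ha).symm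
      · have h' : ¬ ∃ n, ¬ ∀ a ∈ u n, y.1 a = x.1 a := by
          rintro ⟨n, hn⟩
          exact h ⟨n, fun hc => hn fun a ha => (hc a ha).symm⟩
        rw [hd_neg_eq x y h, hd_neg_eq y x h']
    have hd_tri : ∀ x y z, d x z ≤ d x y + d y z := by
      intro x y z
      by_cases h : ∃ n, ¬ ∀ a ∈ u n, x.1 a = z.1 a
      · have hmax : d x z ≤ max (d x y) (d y z) := by
          have hbad := Nat.find_spec h
          have hor : ¬ (∀ a ∈ u (Nat.find h), x.1 a = y.1 a) ∨
              ¬ (∀ a ∈ u (Nat.find h), y.1 a = z.1 a) := by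
            rcases Classical.em (∀ a ∈ u (Nat.find h), x.1 a = y.1 a) with h1 | h1
            · exact Or.inr fun h2 => hbad fun a ha => (h1 a ha).trans (h2 a ha)
            · exact Or.inl h1
          rcases hor with h1 | h1
          · have hxy : ∃ n, ¬ ∀ a ∈ u n, x.1 a = y.1 a := ⟨Nat.find h, h1⟩
            calc d x z = (2⁻¹ : ℝ) ^ Nat.find h := hd_pos_eq x z h
              _ ≤ (2⁻¹ : ℝ) ^ Nat.find hxy :=
                pow_le_pow_of_le_one (by norm_num) (by norm_num) (Nat.find_le h1)
              _ = d x y := (hd_pos_eq x y hxy).symm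
              _ ≤ max (d x y) (d y z) := le_max_left _ _
          · have hyz : ∃ n, ¬ ∀ a ∈ u n, y.1 a = z.1 a := ⟨Nat.find h, h1⟩
            calc d x z = (2⁻¹ : ℝ) ^ Nat.find h := hd_pos_eq x z h
              _ ≤ (2⁻¹ : ℝ) ^ Nat.find hyz :=
                pow_le_pow_of_le_one (by norm_num) (by norm_num) (Nat.find_le h1)
              _ = d y z := (hd_pos_eq y z hyz).symm
              _ ≤ max (d x y) (d y z) := le_max_right _ _
        exact hmax.trans (max_le_add_of_nonneg (hd_nonneg _ _) (hd_nonneg _ _))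
      · rw [hd_neg_eq x z h]
        exact add_nonneg (hd_nonneg _ _) (hd_nonneg _ _)
    have hd_eq : ∀ x y, d x y = 0 → x = y := by
      intro x y hxy
      by_cases h : ∃ n, ¬ ∀ a ∈ u n, x.1 a = y.1 a
      · rw [hd_pos_eq x y h] at hxy
        exact absurd hxy (pow_ne_zero _ (by norm_num))
      · push_neg at h
        refine Subtype.ext (funext fun a => ?_)
        obtain ⟨n, hn⟩ := hucof {a} (hsingleton a)
        exact h n a (hn rfl)
    have H : ∀ s : Set (FinVec K F),
        IsOpen s ↔ ∀ x ∈ s, ∃ ε > 0, ∀ y, d x y < ε → y ∈ s := by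
      intro s
      constructor
      · intro hs x hx
        obtain ⟨v, hv, hsub⟩ := hs x hx
        obtain ⟨n, hn⟩ := hucof v hv
        refine ⟨(2⁻¹ : ℝ) ^ n, pow_pos half_pos n, fun y hdy => ?_⟩
        apply hsub
        intro a ha
        by_cases h : ∃ m, ¬ ∀ b ∈ u m, x.1 b = y.1 b
        · rw [hd_pos_eq x y h] at hdy
          have hlt : n < Nat.find h :=
            (pow_lt_pow_iff_right_of_lt_one₀ half_pos half_lt_one).mp hdy
          have hmin := Nat.find_min h hlt
          exact ((not_not.mp hmin) a (hn ha)).symm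
        · push_neg at h
          exact (h n a (hn ha)).symm
      · intro hball x hx
        obtain ⟨ε, hε, hb⟩ := hball x hx
        obtain ⟨n, hn⟩ := exists_pow_lt_of_lt_one hε half_lt_one
        refine ⟨u n, hu n, fun y hy => hb y ?_⟩
        by_cases h : ∃ m, ¬ ∀ b ∈ u m, x.1 b = y.1 b
        · rw [hd_pos_eq x y h]
          have hagree : ∀ b ∈ u n, x.1 b = y.1 b := fun b hb' => (hy b hb').symm
          have hgt : n < Nat.find h := by
            rcases lt_or_ge n (Nat.find h) with h1 | h1
            · exact h1
            · exact absurd (fun b hb' => hagree b (humono h1 hb')) (Nat.find_spec h)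
          exact lt_trans (pow_lt_pow_right_of_lt_one₀ half_pos half_lt_one hgt) hn
        · rw [hd_neg_eq x y h]
          exact hε
    letI M := MetricSpace.ofDistTopology d hd_self hd_comm hd_tri H hd_eq
    exact (inferInstance : TopologicalSpace.MetrizableSpace (FinVec K F))
end

section
/- Let X be the finiteness space with web |X| = ℕ-indexed finite multisets of ℕ (i.e., finitely supported functions ℕ → ℕ) and F(X) = {u : ∃ n, every m ∈ u has support ⊆ {0,…,n}}. Then there is no monotone sequence (u'ₙ) in F(X)^⊥ cofinal in F(X)^⊥ under inclusion; consequently the ltvs K⟨X⟩ is not metrizable. -/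
/-- The finiteness structure of `!(?1)`: a set of finite multisets of naturals
is finitary iff all its elements are supported on some `{0,…,n}`. -/
def Fexp : Set (Set (Multiset ℕ)) :=
  {u | ∃ n : ℕ, ∀ m ∈ u, ∀ k ∈ m, k ≤ n}

/-- First half: no monotone cofinal sequence in `Fexp^⊥`. -/
lemma no_cofinal_seq : ¬ ∃ u' : ℕ → Set (Multiset ℕ), (∀ n, u' n ∈ orth Fexp) ∧ Monotone u' ∧
    ∀ v' ∈ orth Fexp, ∃ n, v' ⊆ u' n := by
  rintro ⟨u', horth, -, hcof⟩
  have key : ∀ n : ℕ, ∃ k : ℕ, Multiset.replicate k 0 + {n} ∉ u' n := by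
    intro n
    by_contra h
    push_neg at h
    have hu : Set.range (fun k => Multiset.replicate k 0 + ({n} : Multiset ℕ)) ∈ Fexp := by
      refine ⟨n, ?_⟩
      rintro m ⟨k, rfl⟩ j hj
      rcases Multiset.mem_add.1 hj with hj | hj
      · simp [Multiset.eq_of_mem_replicate hj]
      · simp [Multiset.mem_singleton.1 hj]
    have hinj : Function.Injective (fun k => Multiset.replicate k 0 + ({n} : Multiset ℕ)) := by
      intro a b hab
      have := congrArg Multiset.card hab
      simpa using this
    have hfin : (Set.range (fun k => Multiset.replicate k 0 + ({n} : Multiset ℕ))).Finite := by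
      refine (horth n _ hu).subset ?_
      rintro x ⟨k, rfl⟩
      exact ⟨⟨k, rfl⟩, h k⟩
    exact (Set.infinite_range_of_injective hinj) hfin
  choose k hk using key
  set m : ℕ → Multiset ℕ := fun n => Multiset.replicate (k n) 0 + {n} with hm
  have hv : Set.range m ∈ orth Fexp := by
    rintro u ⟨N, hN⟩
    refine ((Set.finite_Iic N).image m).subset ?_
    rintro x ⟨hxu, n, rfl⟩
    refine ⟨n, ?_, rfl⟩
    exact hN _ hxu n (by simp [hm])
  obtain ⟨n, hn⟩ := hcof _ hv
  exact hk n (hn ⟨n, rfl⟩)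

/-- There is no monotone cofinal sequence in `Fexp^⊥`; consequently the ltvs
`K⟨!(?1)⟩` is not metrizable. -/
theorem finVec_exp_not_metrizable (K : Type*) [Field K] :
    (¬ ∃ u' : ℕ → Set (Multiset ℕ), (∀ n, u' n ∈ orth Fexp) ∧ Monotone u' ∧
        ∀ v' ∈ orth Fexp, ∃ n, v' ⊆ u' n) ∧
      ¬ @TopologicalSpace.MetrizableSpace (FinVec K Fexp) (finTopology K Fexp) := by
  refine ⟨no_cofinal_seq, ?_⟩
  intro hmet
  letI := finTopology K Fexp
  haveI := hmet
  haveI : FirstCountableTopology (FinVec K Fexp) := inferInstance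
  have h0 : Supp (fun _ : Multiset ℕ => (0 : K)) ∈ Fexp := by
    refine ⟨0, fun m hm => absurd rfl hm⟩
  set z : FinVec K Fexp := ⟨fun _ => 0, h0⟩ with hz
  obtain ⟨V, hV⟩ := (nhds z).exists_antitone_basis
  have step : ∀ j : ℕ, ∃ w ∈ orth Fexp,
      {y : FinVec K Fexp | ∀ a ∈ w, y.1 a = 0} ⊆ V j := by
    intro j
    have hVj : V j ∈ nhds z := hV.mem j
    obtain ⟨U, hUV, hUopen, hzU⟩ := mem_nhds_iff.1 hVj
    obtain ⟨w, hw, hsub⟩ := hUopen z hzU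
    exact ⟨w, hw, fun y hy => hUV (hsub hy)⟩
  choose w hw hwsub using step
  set W : ℕ → Set (Multiset ℕ) := Set.accumulate w with hW
  refine no_cofinal_seq ⟨W, ?_, Set.monotone_accumulate, ?_⟩
  · intro n u hu
    rw [hW]
    rw [Set.accumulate, Set.inter_iUnion₂]
    exact Set.Finite.biUnion (Set.finite_Iic n) fun j _ => hw j u hu
  · intro v' hv'
    set S : Set (FinVec K Fexp) := {y | ∀ a ∈ v', y.1 a = 0} with hS
    have hSopen : IsOpen S := by
      intro x hx
      exact ⟨v', hv', fun y hy a ha => (hy a ha).trans (hx a ha)⟩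
    have hSz : z ∈ S := fun a _ => rfl
    obtain ⟨j, -, hj⟩ := hV.toHasBasis.mem_iff.1 (hSopen.mem_nhds hSz)
    refine ⟨j, fun a ha => ?_⟩
    by_contra haw
    have haWj : a ∉ w j := fun h => haw (Set.subset_accumulate h)
    have hySupp : Supp (fun b : Multiset ℕ => if b = a then (1 : K) else 0) ∈ Fexp := by
      refine ⟨a.sum, fun m hm i hi => ?_⟩
      have hma : m = a := by
        by_contra hne
        exact hm (if_neg hne)
      subst hma
      exact Multiset.single_le_sum (fun _ _ => Nat.zero_le _) i hi
    set y : FinVec K Fexp := ⟨fun b => if b = a then (1 : K) else 0, hySupp⟩ with hy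
    have hybasic : y ∈ {y : FinVec K Fexp | ∀ b ∈ w j, y.1 b = 0} := by
      intro b hb
      exact if_neg (fun h : b = a => haWj (h ▸ hb))
    have h1 : y.1 a = 0 := (hj (hwsub j hybasic)) a ha
    simp [hy] at h1
end

section
/- Let X be a finiteness space. A linear subspace B of K⟨X⟩ is linearly bounded if and only if there exists u ∈ F(X) such that every x ∈ B has supp(x) ⊆ u. -/
/-- The underlying set of `K⟨X⟩` inside the full function space. -/
def Ksp {I : Type*} (K : Type*) [Zero K] (F : Set (Set I)) : Set (I → K) :=
  {x | Supp x ∈ F}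

/-- A linear subspace of `K⟨X⟩` is open iff it contains a basic subspace
`V(u') = {x : supp x ∩ u' = ∅}` for some `u' ∈ F^⊥`. -/
def IsOpenSub {I K : Type*} [Field K] (F : Set (Set I))
    (U : Submodule K (I → K)) : Prop :=
  ∃ u' ∈ orth F, ∀ x : I → K, Supp x ∈ F → (∀ a ∈ u', x a = 0) → x ∈ U

/-- A linear subspace `B` of `K⟨X⟩` is linearly bounded if for every open
linear subspace `U` of `K⟨X⟩` there is a finite-dimensional subspace `A` of
`K⟨X⟩` with `B ⊆ U + A`. -/
def LinBoundedIn {I K : Type*} [Field K] (F : Set (Set I))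
    (B : Submodule K (I → K)) : Prop :=
  ∀ U : Submodule K (I → K), (U : Set (I → K)) ⊆ Ksp K F → IsOpenSub F U →
    ∃ A : Submodule K (I → K), (A : Set (I → K)) ⊆ Ksp K F ∧
      FiniteDimensional K A ∧ B ≤ U ⊔ A

lemma supp_add_subset {I K : Type*} [AddZeroClass K] (x y : I → K) :
    Supp (x + y) ⊆ Supp x ∪ Supp y := by
  intro a ha
  by_contra h
  simp only [Supp, Set.mem_union, Set.mem_setOf_eq, not_or, not_not] at h ha
  exact ha (by simp [Pi.add_apply, h.1, h.2])

lemma supp_smul_subset {I K : Type*} [MulZeroClass K] (c : K) (x : I → K) :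
    Supp (c • x) ⊆ Supp x := by
  intro a ha
  simp only [Supp, Set.mem_setOf_eq, Pi.smul_apply, smul_eq_mul] at ha ⊢
  intro h; exact ha (by simp [h])

lemma supp_zero {I K : Type*} [Zero K] : Supp (0 : I → K) = ∅ := by
  ext a; simp [Supp]

lemma orth_mono {I : Type*} {G : Set (Set I)} {u v : Set I}
    (hu : u ∈ orth G) (hv : v ⊆ u) : v ∈ orth G :=
  fun w hw => ((hu w hw).subset (by intro a ⟨h1, h2⟩; exact ⟨h1, hv h2⟩))

lemma orth_union {I : Type*} {G : Set (Set I)} {u v : Set I}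
    (hu : u ∈ orth G) (hv : v ∈ orth G) : u ∪ v ∈ orth G := by
  intro w hw
  have : w ∩ (u ∪ v) = (w ∩ u) ∪ (w ∩ v) := Set.inter_union_distrib_left w u v
  rw [this]
  exact (hu w hw).union (hv w hw)

lemma finite_mem_orth {I : Type*} {G : Set (Set I)} {v : Set I}
    (hv : v.Finite) : v ∈ orth G :=
  fun w _ => hv.subset (Set.inter_subset_right)

/-- The submodule of functions with support in `s`. -/
def suppSub {I : Type*} (K : Type*) [Field K] (s : Set I) : Submodule K (I → K) where
  carrier := {f | Supp f ⊆ s}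
  add_mem' := fun hx hy => (supp_add_subset _ _).trans (Set.union_subset hx hy)
  zero_mem' := by simp [supp_zero]
  smul_mem' := fun c x hx => (supp_smul_subset c x).trans hx

/-- The open subspace attached to `u'`. -/
def Usub {I : Type*} (K : Type*) [Field K] (G : Set (Set I)) (u' : Set I) :
    Submodule K (I → K) where
  carrier := {f | Supp f ∈ orth G ∧ ∀ a ∈ u', f a = 0}
  add_mem' := by
    rintro x y ⟨hx1, hx2⟩ ⟨hy1, hy2⟩
    exact ⟨orth_mono (orth_union hx1 hy1) (supp_add_subset x y),
      fun a ha => by simp [Pi.add_apply, hx2 a ha, hy2 a ha]⟩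
  zero_mem' := ⟨by rw [supp_zero]; exact finite_mem_orth (Set.finite_empty), fun a _ => rfl⟩
  smul_mem' := by
    rintro c x ⟨hx1, hx2⟩
    exact ⟨orth_mono hx1 (supp_smul_subset c x),
      fun a ha => by simp [Pi.smul_apply, hx2 a ha]⟩

lemma eq_sum_single {I : Type*} [DecidableEq I] {K : Type*} [Field K]
    (s : Finset I) (z : I → K) (h : Supp z ⊆ ↑s) :
    z = ∑ a ∈ s, z a • (Pi.single a (1 : K) : I → K) := by
  funext j
  rw [Finset.sum_apply]
  simp only [Pi.smul_apply, Pi.single_apply, smul_eq_mul, mul_ite, mul_one, mul_zero]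
  rw [Finset.sum_ite_eq s j (fun a => z a)]
  by_cases hj : j ∈ s
  · simp [hj]
  · simp [hj]
    by_contra hz
    exact hj (h hz)

/-- A linear subspace `B` of `K⟨X⟩` is linearly bounded iff there exists
`u ∈ F` such that every `x ∈ B` has `supp x ⊆ u`. -/
theorem linBounded_iff_supp_subset {I : Type*} (K : Type*) [Field K]
    (F : Set (Set I)) (hF : orth (orth F) = F)
    (B : Submodule K (I → K)) (hB : (B : Set (I → K)) ⊆ Ksp K F) :
    LinBoundedIn F B ↔ ∃ u ∈ F, ∀ x ∈ B, Supp x ⊆ u := by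
  classical
  constructor
  · intro hLB
    refine ⟨⋃ x ∈ (B : Set (I → K)), Supp x, ?_, fun x hx => Set.subset_biUnion_of_mem hx⟩
    rw [← hF]
    intro u' hu'
    obtain ⟨A, hAK, hAfd, hBle⟩ := hLB (Usub K (orth F) u')
      (fun f hf => by rw [Ksp, Set.mem_setOf_eq, ← hF]; exact hf.1)
      ⟨u', hu', fun x hxF hx0 => ⟨by rw [hF]; exact hxF, hx0⟩⟩
    have hfg : A.FG := Module.Finite.iff_fg.mp hAfd
    obtain ⟨S, hS⟩ := hfg
    have hSsub : (S : Set (I → K)) ⊆ (A : Set (I → K)) := by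
      rw [← hS]; exact Submodule.subset_span
    have hw : ∀ g ∈ A, Supp g ⊆ ⋃ f ∈ (S : Set (I → K)), Supp f := by
      intro g hg
      have hle : A ≤ suppSub K (⋃ f ∈ (S : Set (I → K)), Supp f) := by
        rw [← hS]
        apply Submodule.span_le.mpr
        intro f hf
        exact Set.subset_biUnion_of_mem hf
      exact hle hg
    have hwfin : (u' ∩ ⋃ f ∈ (S : Set (I → K)), Supp f).Finite := by
      rw [Set.inter_comm]
      rw [Set.iUnion₂_inter]
      apply Set.Finite.biUnion S.finite_toSet
      intro f hf
      exact hu' (Supp f) (hAK (hSsub hf))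
    apply hwfin.subset
    rintro a ⟨hau', hau⟩
    rw [Set.mem_iUnion₂] at hau
    obtain ⟨x, hx, hxa⟩ := hau
    obtain ⟨y, hy, z, hz, hyz⟩ := Submodule.mem_sup.mp (hBle hx)
    have hya : y a = 0 := hy.2 a hau'
    have hza : z a ≠ 0 := by
      intro h
      apply hxa
      show x a = 0
      rw [← hyz]; simp [Pi.add_apply, hya, h]
    exact ⟨hau', hw z hz hza⟩
  · rintro ⟨u, huF, hsupp⟩ U hUK hUopen
    obtain ⟨u', hu', hV⟩ := hUopen
    have hfin : (u ∩ u').Finite := hu' u huF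
    set s : Finset I := hfin.toFinset with hs
    refine ⟨Submodule.span K ((fun a => Pi.single a (1 : K)) '' ↑s), ?_, ?_, ?_⟩
    · intro g hg
      have hle : Submodule.span K ((fun a => Pi.single a (1 : K)) '' ↑s)
          ≤ suppSub K (↑s : Set I) := by
        apply Submodule.span_le.mpr
        rintro f ⟨a, ha, rfl⟩
        intro j hj
        simp only [Supp, Set.mem_setOf_eq, Pi.single_apply] at hj
        by_cases hja : j = a
        · subst hja; exact ha
        · simp [hja] at hj
      have : Supp g ⊆ ↑s := hle hg
      rw [Ksp, Set.mem_setOf_eq, ← hF]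
      exact finite_mem_orth (s.finite_toSet.subset this)
    · exact FiniteDimensional.span_of_finite K ((s.finite_toSet).image _)
    · intro x hx
      set y : I → K := fun a => if a ∈ u' then 0 else x a with hy
      set z : I → K := fun a => if a ∈ u' then x a else 0 with hz
      have hxyz : x = y + z := by
        funext a
        by_cases ha : a ∈ u' <;> simp [hy, hz, ha]
      have hyU : y ∈ U := by
        apply hV
        · have hsx : Supp x ∈ F := hB hx
          have : Supp y ⊆ Supp x := by
            intro a ha
            simp only [Supp, Set.mem_setOf_eq, hy] at ha ⊢
            by_cases h : a ∈ u' <;> simp [h] at ha <;> exact ha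
          rw [← hF] at hsx ⊢
          exact orth_mono hsx this
        · intro a ha; simp [hy, ha]
      have hzA : z ∈ Submodule.span K ((fun a => Pi.single a (1 : K)) '' ↑s) := by
        have hzs : Supp z ⊆ ↑s := by
          intro a ha
          simp only [Supp, Set.mem_setOf_eq, hz] at ha
          by_cases h : a ∈ u'
          · simp [h] at ha
            simp [hs, Set.Finite.mem_toFinset]
            exact ⟨hsupp x hx ha, h⟩
          · simp [h] at ha
        rw [eq_sum_single s z hzs]
        apply Submodule.sum_mem
        intro a ha
        exact Submodule.smul_mem _ _ (Submodule.subset_span ⟨a, ha, rfl⟩)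
      rw [hxyz]
      exact Submodule.add_mem _ (Submodule.mem_sup_left hyU) (Submodule.mem_sup_right hzA)
end

section
/- Let X, Y be finiteness spaces and define |X⊸Y| = |X| × |Y| with F(X⊸Y) = {w : ∀ u ∈ F(X), ∀ v' ∈ F(Y)^⊥, w ∩ (u × v') is finite}. Then for any w ∈ F(X⊸Y), u ∈ F(X) and v' ∈ F(Y)^⊥: the direct image w·u = {b : ∃ a ∈ u, (a,b) ∈ w} belongs to F(Y), and the inverse image wᵀ·v' = {a : ∃ b ∈ v', (a,b) ∈ w} belongs to F(X)^⊥. -/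
/-- For `w ∈ F(X ⊸ Y)`, `u ∈ F(X)` and `v' ∈ F(Y)^⊥`, the direct image
`w·u` belongs to `F(Y)` and the inverse image `wᵀ·v'` belongs to `F(X)^⊥`. -/
theorem linImpl_direct_and_inverse_image {A B : Type*}
    (FX : Set (Set A)) (FY : Set (Set B))
    (hX : orth (orth FX) = FX) (hY : orth (orth FY) = FY)
    (w : Set (A × B))
    (hw : ∀ u ∈ FX, ∀ v' ∈ orth FY, (w ∩ (u ×ˢ v')).Finite)
    (u : Set A) (hu : u ∈ FX) (v' : Set B) (hv' : v' ∈ orth FY) :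
    {b : B | ∃ a ∈ u, (a, b) ∈ w} ∈ FY ∧
      {a : A | ∃ b ∈ v', (a, b) ∈ w} ∈ orth FX := by
  constructor
  · rw [← hY]
    intro v'' hv''
    have h := hw u hu v'' hv''
    apply Set.Finite.subset (h.image Prod.snd)
    rintro b ⟨hb, a, ha, hab⟩
    exact ⟨(a, b), ⟨hab, ha, hb⟩, rfl⟩
  · intro u'' hu''
    have h := hw u'' hu'' v' hv'
    apply Set.Finite.subset (h.image Prod.fst)
    rintro a ⟨ha, b, hb, hab⟩
    exact ⟨(a, b), ⟨hab, ha, hb⟩, rfl⟩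
end

section
/- Let X, Y be finiteness spaces and M ∈ K⟨X⊸Y⟩ (a matrix with supp(M) ∈ F(X⊸Y)). For every x ∈ K⟨X⟩ and every b ∈ |Y|, the family (M_{a,b} x_a)_{a ∈ |X|} has finite support, so Mx = (∑_a M_{a,b} x_a)_b is well-defined; moreover supp(Mx) ⊆ supp(M)·supp(x), so Mx ∈ K⟨Y⟩, and the resulting linear map K⟨X⟩ → K⟨Y⟩ is continuous. -/
/-- Application of a matrix `M ∈ K⟨X ⊸ Y⟩` to a vector. -/
noncomputable def matApp {A B K : Type*} [Semiring K]
    (M : A × B → K) (x : A → K) : B → K :=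
  fun b => ∑ᶠ a, M (a, b) * x a

/-- For `M ∈ K⟨X ⊸ Y⟩` and `x ∈ K⟨X⟩`: each family `(M_{a,b} x_a)_a` has
finite support (so `Mx` is well defined), `supp(Mx) ⊆ supp(M)·supp(x)` and
`Mx ∈ K⟨Y⟩`; the resulting map is linear and continuous (continuity expressed
on the basic linear neighborhoods). -/
theorem matApp_welldef_linear_continuous {A B : Type*} (K : Type*) [Field K]
    (FX : Set (Set A)) (FY : Set (Set B))
    (hX : orth (orth FX) = FX) (hY : orth (orth FY) = FY)
    (M : A × B → K)
    (hM : ∀ u ∈ FX, ∀ v' ∈ orth FY, (Supp M ∩ (u ×ˢ v')).Finite) :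
    (∀ x : A → K, Supp x ∈ FX → ∀ b : B,
        (Supp fun a => M (a, b) * x a).Finite) ∧
    (∀ x : A → K, Supp x ∈ FX →
        Supp (matApp M x) ⊆ {b : B | ∃ a ∈ Supp x, (a, b) ∈ Supp M} ∧
        Supp (matApp M x) ∈ FY) ∧
    (∀ x y : A → K, Supp x ∈ FX → Supp y ∈ FX →
        matApp M (x + y) = matApp M x + matApp M y) ∧
    (∀ (c : K) (x : A → K), Supp x ∈ FX →
        matApp M (c • x) = c • matApp M x) ∧
    (∀ v' ∈ orth FY, ∃ u' ∈ orth FX, ∀ x : A → K, Supp x ∈ FX →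
        (∀ a ∈ u', x a = 0) → ∀ b ∈ v', matApp M x b = 0) := by
  have hsupp : ∀ (x : A → K) (b : B),
      (Supp fun a => M (a, b) * x a) = Function.support fun a => M (a, b) * x a := fun _ _ => rfl
  have key : ∀ x : A → K, Supp x ∈ FX → ∀ b : B,
      (Supp fun a => M (a, b) * x a).Finite := by
    intro x hx b
    have hb : ({b} : Set B) ∈ orth FY := fun u _ => (Set.finite_singleton b).inter_of_right u
    refine ((hM (Supp x) hx {b} hb).image Prod.fst).subset ?_
    rintro a (ha : M (a, b) * x a ≠ 0)
    exact ⟨(a, b), ⟨left_ne_zero_of_mul ha, ⟨right_ne_zero_of_mul ha, rfl⟩⟩, rfl⟩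
  refine ⟨key, ?_, ?_, ?_, ?_⟩
  · intro x hx
    constructor
    · rintro b (hb : matApp M x b ≠ 0)
      have : ∃ a, M (a, b) * x a ≠ 0 := by
        by_contra h
        push_neg at h
        exact hb (finsum_eq_zero_of_forall_eq_zero h)
      obtain ⟨a, ha⟩ := this
      exact ⟨a, right_ne_zero_of_mul ha, left_ne_zero_of_mul ha⟩
    · rw [← hY]
      intro v' hv'
      refine ((hM (Supp x) hx v' hv').image Prod.snd).subset ?_
      rintro b ⟨hb2, hb1⟩
      have : ∃ a, M (a, b) * x a ≠ 0 := by
        by_contra h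
        push_neg at h
        exact hb1 (finsum_eq_zero_of_forall_eq_zero h)
      obtain ⟨a, ha⟩ := this
      exact ⟨(a, b), ⟨left_ne_zero_of_mul ha, ⟨right_ne_zero_of_mul ha, hb2⟩⟩, rfl⟩
  · intro x y hx hy
    funext b
    show (∑ᶠ a, M (a, b) * (x a + y a)) = (∑ᶠ a, M (a, b) * x a) + ∑ᶠ a, M (a, b) * y a
    rw [← finsum_add_distrib (by exact key x hx b)
      (by exact key y hy b)]
    simp [mul_add]
  · intro c x hx
    funext b
    show (∑ᶠ a, M (a, b) * (c * x a)) = c * ∑ᶠ a, M (a, b) * x a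
    rw [mul_finsum' _ _ (by exact key x hx b)]
    simp [mul_left_comm]
  · intro v' hv'
    refine ⟨{a | ∃ b ∈ v', (a, b) ∈ Supp M}, ?_, ?_⟩
    · intro u hu
      refine ((hM u hu v' hv').image Prod.fst).subset ?_
      rintro a ⟨ha1, b, hb, hab⟩
      exact ⟨(a, b), ⟨hab, ⟨ha1, hb⟩⟩, rfl⟩
    · intro x hx h0 b hb
      refine finsum_eq_zero_of_forall_eq_zero fun a => ?_
      by_cases hMa : M (a, b) = 0
      · simp [hMa]
      · rw [h0 a ⟨b, hb, hMa⟩, mul_zero]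
end

section
/- In REL, let f ⊆ (!X × X) × Y satisfy the symmetry condition: for all finite multisets m over X, all a, a' ∈ X and b ∈ Y, ((m+[a], a'), b) ∈ f iff ((m+[a'], a), b) ∈ f. Then g = {(m+[a], b) : ((m,a),b) ∈ f} ⊆ !X × Y is an antiderivative of f: g ∘ ∂̄_X = f, where ∂̄_X = {((m,a), m+[a])}. -/
/-- Relational composition: first `R`, then `S`. -/
def relComp {α β γ : Type*} (R : Set (α × β)) (S : Set (β × γ)) :
    Set (α × γ) :=
  {p | ∃ b, (p.1, b) ∈ R ∧ (b, p.2) ∈ S}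

/-- The coderivative morphism `∂̄_X : !X ⊗ X → !X` of the relational model. -/
def coderRel (X : Type*) : Set ((Multiset X × X) × Multiset X) :=
  {p | ∃ (m : Multiset X) (a : X), p = ((m, a), m + {a})}

lemma add_singleton_eq {X : Type*} {m m' : Multiset X} {a a' : X}
    (h : m + {a} = m' + {a'}) :
    (m = m' ∧ a = a') ∨ ∃ n, m = n + {a'} ∧ m' = n + {a} := by
  have h' : a ::ₘ m = a' ::ₘ m' := by
    rw [← Multiset.singleton_add, ← Multiset.singleton_add, add_comm _ m, add_comm _ m']
    exact h
  rcases Multiset.cons_eq_cons.mp h' with ⟨ha, hm⟩ | ⟨_, cs, hm, hm'⟩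
  · exact Or.inl ⟨hm, ha⟩
  · refine Or.inr ⟨cs, ?_, ?_⟩ <;>
      · rw [add_comm, Multiset.singleton_add]; assumption

/-- In `REL`, if `f ⊆ (!X × X) × Y` satisfies the symmetry condition, then
`g = {(m+[a], b) : ((m,a),b) ∈ f}` is an antiderivative of `f`:
`g ∘ ∂̄_X = f`. -/
theorem rel_antiderivative (X Y : Type*) (f : Set ((Multiset X × X) × Y))
    (hsym : ∀ (m : Multiset X) (a a' : X) (b : Y),
      ((m + {a}, a'), b) ∈ f ↔ ((m + {a'}, a), b) ∈ f) :
    relComp (coderRel X)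
        {q : Multiset X × Y | ∃ (m : Multiset X) (a : X) (b : Y),
          ((m, a), b) ∈ f ∧ q = (m + {a}, b)} = f := by
  ext ⟨⟨m, a⟩, b⟩
  constructor
  · rintro ⟨p, hp, hq⟩
    obtain ⟨m0, a0, heq⟩ := hp
    obtain ⟨hma, hp⟩ := Prod.mk.injEq .. ▸ heq
    cases hma
    subst hp
    obtain ⟨m', a', b', hf, heq'⟩ := hq
    obtain ⟨hmm, hb⟩ := Prod.mk.injEq .. ▸ heq'
    subst hb
    rcases add_singleton_eq hmm.symm with ⟨h1, h2⟩ | ⟨n, h1, h2⟩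
    · subst h1; subst h2; exact hf
    · subst h1; subst h2
      exact (hsym n a a' b).mp hf
  · intro hf
    exact ⟨m + {a}, ⟨m, a, rfl⟩, m, a, b, hf, rfl⟩
end

section
/- Let K be a commutative ring in which positive integers are invertible, let S be a set of 'simple terms' graded by a degree function deg_x into ℕ, and let u = ∑_d u_d be a finitely supported K-linear combination with u_d homogeneous of degree d in x and each term linear (degree 1) in a variable h. Suppose u satisfies the symmetry condition ∂u/∂x·h' = ∂(u[h'/h])/∂x·h where ∂ denotes a derivation satisfying: ∂s/∂x·x = d·s for s of degree d in x, ∂(s[x/h])/∂x·h' = (∂s/∂x·h')[x/h] + s[h'/h] for s linear in h with h' fresh. Then v = ∑_d (1/(d+1)) u_d[x/h] satisfies ∂v/∂x·h = u. -/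
/-- Extend an operation on simple terms to `K`-linear combinations. -/
noncomputable def extLin {S K : Type*} [Semiring K] (D : S → (S →₀ K))
    (u : S →₀ K) : S →₀ K :=
  u.sum fun s c => c • D s

section Aux

variable {K : Type*} [CommRing K] {S : Type*}

/-- `extLin` as a linear map. -/
noncomputable def extLinLM (D : S → (S →₀ K)) : (S →₀ K) →ₗ[K] (S →₀ K) :=
  Finsupp.lsum K fun s => LinearMap.smulRight (LinearMap.id : K →ₗ[K] K) (D s)

lemma extLinLM_apply (D : S → (S →₀ K)) (w : S →₀ K) :
    extLinLM D w = w.sum fun s c => c • D s := by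
  simp [extLinLM, Finsupp.lsum_apply, Finsupp.sum]

lemma extLin_eq_LM (D : S → (S →₀ K)) (w : S →₀ K) :
    extLin D w = extLinLM D w := by
  rw [extLin, extLinLM_apply]

lemma extLinLM_single (D : S → (S →₀ K)) (s : S) (c : K) :
    extLinLM D (Finsupp.single s c) = c • D s := by
  simp [extLinLM]

lemma extLinLM_mapDomain (D : S → (S →₀ K)) (f : S → S) (w : S →₀ K) :
    extLinLM D (Finsupp.mapDomain f w) = w.sum fun s c => c • D (f s) := by
  rw [Finsupp.mapDomain, map_finsuppSum]
  exact Finsupp.sum_congr fun s _ => extLinLM_single D (f s) _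

lemma mapDomain_finsupp_sum_smul (f : S → S) (D : S → (S →₀ K)) (w : S →₀ K) :
    Finsupp.mapDomain f (w.sum fun s c => c • D s) =
      w.sum fun s c => c • Finsupp.mapDomain f (D s) := by
  rw [← Finsupp.lmapDomain_apply K K f, map_finsuppSum]
  simp only [map_smul, Finsupp.lmapDomain_apply]

lemma mapDomain_eq_sum_smul_single (f : S → S) (w : S →₀ K) :
    Finsupp.mapDomain f w = w.sum fun s c => c • Finsupp.single (f s) 1 := by
  rw [Finsupp.mapDomain]
  exact Finsupp.sum_congr fun s _ => by rw [Finsupp.smul_single, smul_eq_mul, mul_one]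

end Aux

/-- Antiderivatives for resource polynomials.  `S` is a set of simple terms,
`degX`/`degH` give the degrees in the variables `x` and `h`,
`subXh`/`subH'h`/`subHh'` are the substitutions `[x/h]`, `[h'/h]`, `[h/h']`,
and `Dh`, `Dh'`, `Dx` are the differential substitutions `∂·/∂x·h`,
`∂·/∂x·h'`, `∂·/∂x·x`.  Under the listed axioms (Euler's identity, the
derivation/substitution commutation, preservation and freshness properties) and
the symmetry hypothesis on `u` (linear in `h`), the combination
`v = ∑_d (1/(d+1)) u_d[x/h]` satisfies `∂v/∂x·h = u`. -/
theorem resource_antiderivative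
    {K : Type*} [CommRing K] (hK : ∀ n : ℕ, IsUnit ((n + 1 : ℕ) : K))
    {S : Type*} (degX degH : S → ℕ)
    (subXh subH'h subHh' : S → S)
    (Dh Dh' Dx : S → (S →₀ K))
    -- Euler's identity: `∂s/∂x·x = d·s` for `s` of degree `d` in `x`.
    (hEuler : ∀ s : S, Dx s = (degX s : K) • Finsupp.single s 1)
    -- `∂(s[x/h])/∂x·h' = (∂s/∂x·h')[x/h] + s[h'/h]` for `s` linear in `h`.
    (hchain : ∀ s : S, degH s = 1 →
      Dh' (subXh s) =
        Finsupp.mapDomain subXh (Dh' s) + Finsupp.single (subH'h s) 1)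
    -- substituting `x` for `h` in `∂s/∂x·h` gives `∂s/∂x·x` when `s` is `h`-free
    (hDx : ∀ s : S, degH s = 0 → Finsupp.mapDomain subXh (Dh s) = Dx s)
    -- `[h'/h]` preserves the degree in `x` and erases `h`
    (hpres : ∀ s : S, degX (subH'h s) = degX s ∧ degH (subH'h s) = 0)
    -- `[x/h]` erases `h` from terms linear in `h`
    (hXfree : ∀ s : S, degH s = 1 → degH (subXh s) = 0)
    -- `h'` is fresh: renaming `h'` to `h` turns `∂·/∂x·h'` into `∂·/∂x·h` on
    -- `h`-free terms, and undoes the substitution `[h'/h]`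
    (hren : ∀ s : S, degH s = 0 →
      Finsupp.mapDomain subHh' (Dh' s) = Dh s)
    (hretr : ∀ s : S, subHh' (subH'h s) = s)
    (u : S →₀ K) (hu : ∀ s ∈ u.support, degH s = 1)
    -- the symmetry hypothesis, for each homogeneous degree `d` in `x`:
    -- `∂u_d/∂x·h' = ∂(u_d[h'/h])/∂x·h`
    (hsym : ∀ d : ℕ,
      extLin Dh' (u.filter fun s => degX s = d) =
        extLin Dh (Finsupp.mapDomain subH'h (u.filter fun s => degX s = d))) :
    extLin Dh
        (u.sum fun s c =>
          (Ring.inverse ((degX s + 1 : ℕ) : K)) •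
            Finsupp.single (subXh s) c) = u := by
  classical
  have hsupp : ∀ (d : ℕ) (s : S), s ∈ (u.filter fun s => degX s = d).support →
      degH s = 1 ∧ degX s = d := by
    intro d s hs
    rw [Finsupp.support_filter, Finset.mem_filter] at hs
    exact ⟨hu s hs.1, hs.2⟩
  -- the key computation, per homogeneous degree `d`
  have key : ∀ d : ℕ,
      ((u.filter fun s => degX s = d).sum fun s c => c • Dh (subXh s)) =
        ((d + 1 : ℕ) : K) • (u.filter fun s => degX s = d) := by
    intro d
    set ud : S →₀ K := u.filter fun s => degX s = d with hud
    -- the chain rule, summed over `ud`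
    have eqA : (ud.sum fun s c => c • Dh' (subXh s)) =
        (ud.sum fun s c => c • Finsupp.mapDomain subXh (Dh' s)) +
          Finsupp.mapDomain subH'h ud := by
      rw [mapDomain_eq_sum_smul_single, ← Finsupp.sum_add]
      refine Finsupp.sum_congr fun s hs => ?_
      rw [hchain s (hsupp d s hs).1, smul_add]
    -- the symmetry hypothesis, rewritten
    have eqB : (ud.sum fun s c => c • Dh' s) =
        ud.sum fun s c => c • Dh (subH'h s) := by
      calc (ud.sum fun s c => c • Dh' s) = extLin Dh' ud := rfl
        _ = extLin Dh (Finsupp.mapDomain subH'h ud) := hsym d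
        _ = extLinLM Dh (Finsupp.mapDomain subH'h ud) := extLin_eq_LM _ _
        _ = _ := extLinLM_mapDomain _ _ _
    -- substitute `x` for `h` and use Euler's identity
    have eqC : (ud.sum fun s c => c • Finsupp.mapDomain subXh (Dh' s)) =
        (d : K) • Finsupp.mapDomain subH'h ud := by
      rw [← mapDomain_finsupp_sum_smul, eqB, mapDomain_finsupp_sum_smul]
      have : (ud.sum fun s c => c • Finsupp.mapDomain subXh (Dh (subH'h s))) =
          ud.sum fun s c => (d : K) • (c • Finsupp.single (subH'h s) 1) := by
        refine Finsupp.sum_congr fun s hs => ?_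
        rw [hDx _ (hpres s).2, hEuler, (hpres s).1, (hsupp d s hs).2,
          smul_comm]
      rw [this, ← Finsupp.smul_sum, mapDomain_eq_sum_smul_single]
    have eqD : (ud.sum fun s c => c • Dh' (subXh s)) =
        ((d + 1 : ℕ) : K) • Finsupp.mapDomain subH'h ud := by
      rw [eqA, eqC, Nat.cast_add, Nat.cast_one, add_smul, one_smul]
    -- rename `h'` back to `h`
    have eqE : Finsupp.mapDomain subHh' (ud.sum fun s c => c • Dh' (subXh s)) =
        ud.sum fun s c => c • Dh (subXh s) := by
      rw [mapDomain_finsupp_sum_smul]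
      refine Finsupp.sum_congr fun s hs => ?_
      rw [hren _ (hXfree s (hsupp d s hs).1)]
    have eqF : Finsupp.mapDomain subHh' (Finsupp.mapDomain subH'h ud) = ud := by
      rw [← Finsupp.mapDomain_comp]
      have : subHh' ∘ subH'h = id := funext hretr
      rw [this, Finsupp.mapDomain_id]
    calc (ud.sum fun s c => c • Dh (subXh s))
        = Finsupp.mapDomain subHh' (ud.sum fun s c => c • Dh' (subXh s)) :=
          eqE.symm
      _ = Finsupp.mapDomain subHh'
            (((d + 1 : ℕ) : K) • Finsupp.mapDomain subH'h ud) := by rw [eqD]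
      _ = ((d + 1 : ℕ) : K) • ud := by rw [Finsupp.mapDomain_smul, eqF]
  -- assemble: push `extLin` inside the sum
  have hL : extLin Dh
      (u.sum fun s c =>
        (Ring.inverse ((degX s + 1 : ℕ) : K)) • Finsupp.single (subXh s) c) =
      u.sum fun s c =>
        (Ring.inverse ((degX s + 1 : ℕ) : K)) • (c • Dh (subXh s)) := by
    rw [extLin_eq_LM, map_finsuppSum]
    exact Finsupp.sum_congr fun s _ => by rw [map_smul, extLinLM_single]
  rw [hL, Finsupp.sum]
  -- group the terms by degree in `x`
  rw [← Finset.sum_fiberwise_of_maps_to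
    (fun s hs => Finset.mem_image_of_mem degX hs)
    (fun s => (Ring.inverse ((degX s + 1 : ℕ) : K)) • (u s • Dh (subXh s)))]
  have inner : ∀ d ∈ u.support.image degX,
      (∑ s ∈ u.support.filter (fun s => degX s = d),
          (Ring.inverse ((degX s + 1 : ℕ) : K)) • (u s • Dh (subXh s))) =
        u.filter fun s => degX s = d := by
    intro d _
    have hconv : (∑ s ∈ u.support.filter (fun s => degX s = d),
        u s • Dh (subXh s)) =
        (u.filter fun s => degX s = d).sum fun s c => c • Dh (subXh s) := by
      rw [Finsupp.sum, Finsupp.support_filter]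
      exact Finset.sum_congr rfl fun s hs => by
        rw [Finsupp.filter_apply_pos (fun s => degX s = d) u (Finset.mem_filter.mp hs).2]
    calc (∑ s ∈ u.support.filter (fun s => degX s = d),
          (Ring.inverse ((degX s + 1 : ℕ) : K)) • (u s • Dh (subXh s)))
        = ∑ s ∈ u.support.filter (fun s => degX s = d),
            (Ring.inverse ((d + 1 : ℕ) : K)) • (u s • Dh (subXh s)) :=
          Finset.sum_congr rfl fun s hs => by
            rw [(Finset.mem_filter.mp hs).2]
      _ = (Ring.inverse ((d + 1 : ℕ) : K)) •
            ∑ s ∈ u.support.filter (fun s => degX s = d),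
              u s • Dh (subXh s) := (Finset.smul_sum).symm
      _ = (Ring.inverse ((d + 1 : ℕ) : K)) •
            (((d + 1 : ℕ) : K) • (u.filter fun s => degX s = d)) := by
          rw [hconv, key d]
      _ = u.filter fun s => degX s = d := by
          rw [smul_smul, Ring.inverse_mul_cancel _ (hK d), one_smul]
  rw [Finset.sum_congr rfl inner]
  -- finally, the fibers sum back to `u`
  ext s
  rw [Finset.sum_apply']
  have : ∀ d ∈ u.support.image degX,
      (u.filter fun t => degX t = d) s = if degX s = d then u s else 0 := by
    intro d _
    by_cases h : degX s = d
    · rw [Finsupp.filter_apply_pos (fun t => degX t = d) u h, if_pos h]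
    · rw [Finsupp.filter_apply_neg (fun t => degX t = d) u h, if_neg h]
  rw [Finset.sum_congr rfl this, Finset.sum_ite_eq]
  split_ifs with h
  · rfl
  · exact (Finsupp.notMem_support_iff.mp
      fun hs => h (Finset.mem_image_of_mem _ hs)).symm
end
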